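/- Finite-word characterization of specialization: let M be an input-complete IGMM and q, q' ∈ Q. For a finite sequence i_0, …, i_k of input valuations, let q_0 = q, q_{j+1} = δ(q_j, i_j) and q'_0 = q', q'_{j+1} = δ(q'_j, i_j). Then q' ⊑ q if and only if for every k ≥ 0 and every sequence i_0, …, i_k ∈ 𝔹^I, λ(q'_k, i_k) ⊆ λ(q_k, i_k). -/
import Mathlib


/-- An incompletely specified generalized Mealy machine (IGMM) over input
propositions `I`, output propositions `O`, with state set `Q`.
Input valuations are `I → Bool`, output valuations are `O → Bool`.
`delta` is the partial transition function, `lam` the output function. -/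
structure IGMM (I O Q : Type*) where
  init : Q
  delta : Q → (I → Bool) → Option Q
  lam : Q → (I → Bool) → Set (O → Bool)
  lam_nonempty : ∀ q i, (lam q i).Nonempty
  lam_top : ∀ q i, delta q i = none → lam q i = Set.univ

namespace IGMM

/-- `(ι, o) ⊨ M_q` : either an infinite run, or a finite run ending where `delta`
is undefined. -/
def Sat {I O Q : Type*} (M : IGMM I O Q) (q : Q) (ι : ℕ → I → Bool)
    (o : ℕ → O → Bool) : Prop :=
  (∃ qs : ℕ → Q, qs 0 = q ∧
      ∀ j : ℕ, M.delta (qs j) (ι j) = some (qs (j + 1)) ∧ o j ∈ M.lam (qs j) (ι j)) ∨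
  (∃ (k : ℕ) (qs : ℕ → Q), qs 0 = q ∧
      (∀ j < k, M.delta (qs j) (ι j) = some (qs (j + 1)) ∧ o j ∈ M.lam (qs j) (ι j)) ∧
      M.delta (qs k) (ι k) = none)

/-- The behaviour set `Beh_M(q, ι) = {o | (ι, o) ⊨ M_q}`. -/
def Beh {I O Q : Type*} (M : IGMM I O Q) (q : Q) (ι : ℕ → I → Bool) :
    Set (ℕ → O → Bool) :=
  {o | M.Sat q ι o}

end IGMM

/-- `q' ⊑ q` : the state `q'` of `M'` is a specialization of the state `q` of `M`. -/
def IGMM.Specializes {I O Q' Q : Type*} (M' : IGMM I O Q') (q' : Q')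
    (M : IGMM I O Q) (q : Q) : Prop :=
  ∀ ι : ℕ → I → Bool, M'.Beh q' ι ⊆ M.Beh q ι

/-- `q' ≈ q` : the state `q'` of `M'` is a variation of the state `q` of `M`. -/
def IGMM.IsVariation {I O Q' Q : Type*} (M' : IGMM I O Q') (q' : Q')
    (M : IGMM I O Q) (q : Q) : Prop :=
  ∀ ι : ℕ → I → Bool, (M'.Beh q' ι ∩ M.Beh q ι).Nonempty

/-- Iterated transition: `runFrom d ι q k` is the state `q_k` with `q_0 = q`
and `q_{j+1} = d(q_j, ι_j)`. -/
def runFrom {I Q : Type*} (d : Q → (I → Bool) → Q) (ι : ℕ → I → Bool) (q : Q) :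
    ℕ → Q
  | 0 => q
  | k + 1 => d (runFrom d ι q k) (ι k)

lemma sat_iff_aux {I O Q : Type*} (M : IGMM I O Q) (d : Q → (I → Bool) → Q)
    (hd : ∀ q i, M.delta q i = some (d q i)) (q : Q) (ι : ℕ → I → Bool)
    (o : ℕ → O → Bool) :
    M.Sat q ι o ↔ ∀ j, o j ∈ M.lam (runFrom d ι q j) (ι j) := by
  constructor
  · rintro (⟨qs, h0, h⟩ | ⟨k, qs, h0, h, hnone⟩)
    · have hqs : ∀ j, qs j = runFrom d ι q j := by
        intro j; induction j with
        | zero => exact h0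
        | succ n ih =>
          have := (h n).1
          rw [ih, hd] at this
          simpa [runFrom] using (Option.some.inj this).symm
      intro j; have := (h j).2; rwa [hqs j] at this
    · rw [hd] at hnone; exact absurd hnone (by simp)
  · intro h
    exact Or.inl ⟨runFrom d ι q, rfl, fun j => ⟨(hd _ _).trans rfl, h j⟩⟩

/-- finite-word characterization of specialization for
input-complete machines (input-completeness is witnessed by the total function
`d` underlying `δ`): `q' ⊑ q` iff along every input sequence the output of the
run from `q'` is contained in that of the run from `q` at every step. -/
theorem specialization_iff_finite_words {I O Q : Type*}
    [Fintype I] [Fintype O] [Fintype Q]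
    (M : IGMM I O Q) (d : Q → (I → Bool) → Q)
    (hd : ∀ (q : Q) (i : I → Bool), M.delta q i = some (d q i))
    (q q' : Q) :
    IGMM.Specializes M q' M q ↔
      ∀ (ι : ℕ → I → Bool) (k : ℕ),
        M.lam (runFrom d ι q' k) (ι k) ⊆ M.lam (runFrom d ι q k) (ι k) := by
  constructor
  · intro hspec ι k o' ho'
    classical
    set o : ℕ → O → Bool := fun j =>
      if j = k then o' else (M.lam_nonempty (runFrom d ι q' j) (ι j)).choose with ho
    have hmem : M.Sat q' ι o := by
      rw [sat_iff_aux M d hd]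
      intro j
      by_cases hj : j = k
      · subst hj; simpa [o] using ho'
      · simpa [o, hj] using (M.lam_nonempty (runFrom d ι q' j) (ι j)).choose_spec
    have h2 : M.Sat q ι o := hspec ι hmem
    rw [sat_iff_aux M d hd] at h2
    have hk := h2 k
    simpa [o] using hk
  · intro h ι o ho
    rw [IGMM.Beh, Set.mem_setOf_eq, sat_iff_aux M d hd] at ho ⊢
    exact fun j => h ι j (ho j)
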